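/- When α = 1 the PEnGUiN layer is exactly O(n)-equivariant: for every linear isometry equivalence Q of the Euclidean space ℝ^n, every choice of functions φ_m, φ_n, φ_e, φ_u, φ_h, and every input (h_i, u_i)_{i=1..N}, if (h_i', u_i')_{i=1..N} is the output of the PEnGUiN layer with blending parameter α = 1 on input (h_i, u_i)_{i=1..N} and (ĥ_i', û_i')_{i=1..N} is its output on the transformed input (h_i, Q u_i)_{i=1..N}, then for every node i one has ĥ_i' = h_i' and û_i' = Q u_i'. -/
import Mathlib


open Finset

noncomputable section

/-- A PEnGUiN layer on `N` nodes with feature dimension `hd`, coordinate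
dimension `nd` (Euclidean space) and message dimension `md`, blending
parameter `α`, and functions `φm, φn, φe, φu, φh`. -/
def penguinLayer (N hd nd md : ℕ) (α : ℝ)
    (φm : (Fin hd → ℝ) → (Fin hd → ℝ) → ℝ → (Fin md → ℝ))
    (φn : (Fin hd → ℝ) → (Fin hd → ℝ) → EuclideanSpace ℝ (Fin nd) →
      EuclideanSpace ℝ (Fin nd) → (Fin md → ℝ))
    (φe φu : (Fin md → ℝ) → ℝ)
    (φh : (Fin hd → ℝ) → (Fin md → ℝ) → (Fin hd → ℝ) × EuclideanSpace ℝ (Fin nd))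
    (H : Fin N → (Fin hd → ℝ)) (U : Fin N → EuclideanSpace ℝ (Fin nd)) :
    Fin N → (Fin hd → ℝ) × EuclideanSpace ℝ (Fin nd) := fun i =>
  let mij : Fin N → (Fin md → ℝ) := fun j => φm (H i) (H j) (‖U i - U j‖ ^ 2)
  let nij : Fin N → (Fin md → ℝ) := fun j => φn (H i) (H j) (U i) (U j)
  let mi : Fin md → ℝ :=
    α • (∑ j ∈ univ.erase i, mij j) + (1 - α) • (∑ j ∈ univ.erase i, nij j)
  let ueq : EuclideanSpace ℝ (Fin nd) :=
    φe mi • U i + ∑ j ∈ univ.erase i, φu (mij j) • (U i - U j)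
  ((φh (H i) mi).1, α • ueq + (1 - α) • (φh (H i) mi).2)

/-- **Exact O(n)-equivariance of the PEnGUiN layer at `α = 1`.** For every
linear isometry equivalence `Q` of Euclidean space `ℝ^nd`, every choice of the
functions and every input, if `(h_i', u_i')` is the output of the PEnGUiN
layer with `α = 1` on input `(h_i, u_i)` and `(ĥ_i', û_i')` its output on the
transformed input `(h_i, Q u_i)`, then `ĥ_i' = h_i'` and `û_i' = Q u_i'` for
every node `i`. -/
theorem penguin_alpha_one_equivariant (N hd nd md : ℕ)
    (Q : EuclideanSpace ℝ (Fin nd) ≃ₗᵢ[ℝ] EuclideanSpace ℝ (Fin nd))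
    (φm : (Fin hd → ℝ) → (Fin hd → ℝ) → ℝ → (Fin md → ℝ))
    (φn : (Fin hd → ℝ) → (Fin hd → ℝ) → EuclideanSpace ℝ (Fin nd) →
      EuclideanSpace ℝ (Fin nd) → (Fin md → ℝ))
    (φe φu : (Fin md → ℝ) → ℝ)
    (φh : (Fin hd → ℝ) → (Fin md → ℝ) → (Fin hd → ℝ) × EuclideanSpace ℝ (Fin nd))
    (H : Fin N → (Fin hd → ℝ)) (U : Fin N → EuclideanSpace ℝ (Fin nd))
    (i : Fin N) :
    (penguinLayer N hd nd md 1 φm φn φe φu φh H (fun k => Q (U k)) i).1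
        = (penguinLayer N hd nd md 1 φm φn φe φu φh H U i).1 ∧
    (penguinLayer N hd nd md 1 φm φn φe φu φh H (fun k => Q (U k)) i).2
        = Q ((penguinLayer N hd nd md 1 φm φn φe φu φh H U i).2) := by
  have hnorm : ∀ j, ‖Q (U i) - Q (U j)‖ = ‖U i - U j‖ := fun j => by
    rw [← Q.map_sub, Q.norm_map]
  simp only [penguinLayer, hnorm, sub_self, zero_smul, one_smul, add_zero]
  refine ⟨trivial, ?_⟩
  rw [map_add, map_sum, Q.map_smul]
  congr 1
  refine Finset.sum_congr rfl fun j _ => ?_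
  rw [Q.map_smul, Q.map_sub]
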